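/- For any closure operator μ on 2^U with U finite, any two nonredundant covers α and β of μ have the same cardinality, and consequently the pair (μ, {nonredundant functions α ⊆ μ}) is a matroid whose bases are the nonredundant covers of μ: the set of nonredundant functions is hereditary, and for nonredundant covers α ≠ β and any (X,C) ∈ α \ β there exists (Y,C) ∈ β \ α such that (α \ {(X,C)}) ∪ {(Y,C)} is a nonredundant cover. -/

import Mathlib

open Set

variable {U : Type*}

/-- A closure operator on the power set of `U`: inclusion, monotonicity, idempotence. -/
def IsClosure (μ : Set U → Set U) : Prop :=
  (∀ X, X ⊆ μ X) ∧ (∀ X Y : Set U, X ⊆ Y → μ X ⊆ μ Y) ∧ (∀ X, μ (μ X) = μ X)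

/-- `K` is a key of `μ`: no proper subset of `K` has the same closure. -/
def IsKey (μ : Set U → Set U) (K : Set U) : Prop :=
  ∀ S : Set U, S ⊂ K → μ S ≠ μ K

/-- One step of the Extension-by-Closure recurrence for a set of pairs `α`. -/
def ecStep (α : Set (Set U × Set U)) (X : Set U) : Set U :=
  X ∪ ⋃ p ∈ {q ∈ α | q.1 ⊆ X}, p.2

/-- The iterates `Xα_t` of the Extension-by-Closure recurrence. -/
def ecIter (α : Set (Set U × Set U)) (X : Set U) : ℕ → Set U
  | 0 => X
  | n + 1 => ecStep α (ecIter α X n)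

/-- `Xα⁺`: the eventual stable value of the increasing recurrence
(for finite `U` the union over all iterates is the stable limit). -/
def extC (α : Set (Set U × Set U)) : Set U → Set U :=
  fun X => ⋃ n, ecIter α X n

/-- The closure `μ` viewed as a set of pairs `(X, Xμ)`. -/
def graphOf (μ : Set U → Set U) : Set (Set U × Set U) :=
  {p | p.2 = μ p.1}

/-- `α` is a cover of `μ`: a subset of `μ` (as pairs) with `α⁺ = μ`. -/
def IsCover (μ : Set U → Set U) (α : Set (Set U × Set U)) : Prop :=
  α ⊆ graphOf μ ∧ extC α = μ

/-- A nonredundant cover of `μ`: a cover no proper subset of which has closure `μ`. -/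
def NonredundantCover (μ : Set U → Set U) (α : Set (Set U × Set U)) : Prop :=
  IsCover μ α ∧ ∀ β : Set (Set U × Set U), β ⊂ α → extC β ≠ μ

/-- A nonredundant function: a subset of some nonredundant cover of `μ`. -/
def NonredundantFn (μ : Set U → Set U) (α : Set (Set U × Set U)) : Prop :=
  ∃ β : Set (Set U × Set U), NonredundantCover μ β ∧ α ⊆ β

/-!
For `C = μ X` let `closureBelow μ X` be the closure of `X` under those implications of `μ` whose
conclusion is not `C`; any cover computes the same set from its pairs with right side `≠ C`.
If `(X, C)` lies in a nonredundant cover `α`, it is not derivable from the other pairs, so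
`C ⊄ closureBelow μ X` and `(X, C)` is the only pair of `α` with right side `C` whose left side
lies in `closureBelow μ X`. Any cover `β` must then contain some `(Y, C)` with
`Y ⊆ closureBelow μ X`, since otherwise its closure of `X` would stay inside that set. Sending
each pair to such a partner injects `α` into `β`, which gives equal cardinalities; replacing
`(X, C)` by its partner keeps a cover of the same size, which is nonredundant because every
cover contains a nonredundant one.
-/

section Extension

variable {α β : Set (Set U × Set U)} {X Y Z : Set U} {p : Set U × Set U}

lemma ecIter_monotone (α : Set (Set U × Set U)) (X : Set U) : Monotone (ecIter α X) :=
  monotone_nat_of_le_succ fun _ => subset_union_left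

lemma subset_extC : X ⊆ extC α X := subset_iUnion (ecIter α X) 0

lemma extC_mono (hαβ : α ⊆ β) (hXY : X ⊆ Y) : extC α X ⊆ extC β Y := by
  refine iUnion_mono fun n => ?_
  induction n with
  | zero => exact hXY
  | succ n ih =>
    exact union_subset_union ih
      (biUnion_subset_biUnion_left fun q hq => ⟨hαβ hq.1, hq.2.trans ih⟩)

lemma extC_subset_of_closed (hXZ : X ⊆ Z) (hZ : ∀ p ∈ α, p.1 ⊆ Z → p.2 ⊆ Z) :
    extC α X ⊆ Z := by
  refine iUnion_subset fun n => ?_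
  induction n with
  | zero => exact hXZ
  | succ n ih => exact union_subset ih (iUnion₂_subset fun q hq => hZ q hq.1 (hq.2.trans ih))

lemma exists_extC_eq_ecIter [Finite U] (α : Set (Set U × Set U)) (X : Set U) :
    ∃ n, extC α X = ecIter α X n := by
  obtain ⟨n, hn⟩ := WellFoundedGT.monotone_chain_condition ⟨ecIter α X, ecIter_monotone α X⟩
  refine ⟨n, subset_antisymm (iUnion_subset fun m => ?_) (subset_iUnion _ n)⟩
  rcases le_total m n with h | h
  · exact ecIter_monotone α X h
  · exact (hn m h).ge

lemma extC_closed [Finite U] (hp : p ∈ α) (h : p.1 ⊆ extC α X) : p.2 ⊆ extC α X := by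
  obtain ⟨n, hn⟩ := exists_extC_eq_ecIter α X
  rw [hn] at h
  exact fun x hx => subset_iUnion _ (n + 1) (mem_union_right _ (mem_biUnion ⟨hp, h⟩ hx))

lemma snd_subset_extC_fst [Finite U] (hp : p ∈ α) : p.2 ⊆ extC α p.1 :=
  extC_closed hp subset_extC

lemma extC_subset_of_subset_extC [Finite U] (h : Y ⊆ extC α X) : extC α Y ⊆ extC α X :=
  extC_subset_of_closed h fun _ hp => extC_closed hp

lemma extC_subset_extC_of_derivable [Finite U] (h : ∀ p ∈ α, p.2 ⊆ extC β p.1) :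
    extC α X ⊆ extC β X :=
  extC_subset_of_closed subset_extC fun p hp hp1 => (h p hp).trans (extC_subset_of_subset_extC hp1)

end Extension

section Covers

variable {μ : Set U → Set U} {α β γ : Set (Set U × Set U)} {X Y V C : Set U}
  {p q : Set U × Set U}

lemma IsClosure.closure_subset_of_subset (hμ : IsClosure μ) (h : X ⊆ μ Y) : μ X ⊆ μ Y :=
  (hμ.2.1 _ _ h).trans (hμ.2.2 Y).le

lemma extC_subset_of_subset_graphOf (hμ : IsClosure μ) (hα : α ⊆ graphOf μ) :
    extC α X ⊆ μ X :=
  extC_subset_of_closed (hμ.1 X) fun p hp h => (hα hp : p.2 = μ p.1) ▸ hμ.closure_subset_of_subset h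

lemma IsCover.of_derivable [Finite U] (hμ : IsClosure μ) (hα : IsCover μ α)
    (hγ : γ ⊆ graphOf μ) (h : ∀ p ∈ α, p.2 ⊆ extC γ p.1) : IsCover μ γ := by
  refine ⟨hγ, funext fun X => subset_antisymm (extC_subset_of_subset_graphOf hμ hγ) ?_⟩
  rw [← hα.2]
  exact extC_subset_extC_of_derivable h

def withoutRhs (α : Set (Set U × Set U)) (C : Set U) : Set (Set U × Set U) := {p ∈ α | p.2 ≠ C}

lemma withoutRhs_subset : withoutRhs α C ⊆ α := sep_subset _ _

lemma withoutRhs_subset_diff_singleton : withoutRhs α p.2 ⊆ α \ {p} :=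
  fun _ hq => ⟨hq.1, fun h => hq.2 (congrArg Prod.snd h)⟩

/-- `Y ⊆ closureBelow μ X` is the paper's direct determination of `Y` by `X`. -/
def closureBelow (μ : Set U → Set U) (X : Set U) : Set U :=
  extC (withoutRhs (graphOf μ) (μ X)) X

lemma IsCover.closure_subset_extC_withoutRhs [Finite U] (hμ : IsClosure μ) (hα : IsCover μ α)
    (hV : ¬C ⊆ μ V) : μ V ⊆ extC (withoutRhs α C) V := by
  rw [← hα.2]
  refine extC_subset_of_closed subset_extC fun p hp hp1 => extC_closed ⟨hp, fun hpC => hV ?_⟩ hp1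
  have hZ : extC (withoutRhs α C) V ⊆ μ V :=
    extC_subset_of_subset_graphOf hμ (withoutRhs_subset.trans hα.1)
  exact hpC ▸ (hα.1 hp : p.2 = μ p.1) ▸ hμ.closure_subset_of_subset (hp1.trans hZ)

-- Only implications whose closure is strictly below `μ X` fire here, and any cover recovers
-- these without its pairs with right side `μ X`.
lemma IsCover.extC_withoutRhs_eq_closureBelow [Finite U] (hμ : IsClosure μ) (hα : IsCover μ α) :
    extC (withoutRhs α (μ X)) X = closureBelow μ X := by
  refine subset_antisymm (extC_mono (fun q hq => ⟨hα.1 hq.1, hq.2⟩) subset_rfl) ?_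
  refine extC_subset_of_closed subset_extC fun r hr hr1 => ?_
  have hZ : extC (withoutRhs α (μ X)) X ⊆ μ X :=
    extC_subset_of_subset_graphOf hμ (withoutRhs_subset.trans hα.1)
  have hr2 : r.2 = μ r.1 := hr.1
  have hrX : μ r.1 ⊆ μ X := hμ.closure_subset_of_subset (hr1.trans hZ)
  have hV : ¬μ X ⊆ μ r.1 := fun h => hr.2 (hr2.trans (subset_antisymm hrX h))
  exact hr2 ▸ (hα.closure_subset_extC_withoutRhs hμ hV).trans (extC_subset_of_subset_extC hr1)

lemma closureBelow_subset_closureBelow [Finite U] (hY : Y ⊆ closureBelow μ X) (h : μ Y = μ X) :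
    closureBelow μ Y ⊆ closureBelow μ X := by
  unfold closureBelow
  rw [h]
  exact extC_subset_of_subset_extC hY

lemma NonredundantCover.not_snd_subset_extC_diff [Finite U] (hμ : IsClosure μ)
    (hα : NonredundantCover μ α) (hp : p ∈ α) : ¬p.2 ⊆ extC (α \ {p}) p.1 := by
  intro h
  refine hα.2 _ (sdiff_singleton_ssubset.mpr hp)
    (hα.1.of_derivable hμ (sdiff_subset.trans hα.1.1) fun q hq => ?_).2
  by_cases hqp : q = p
  · exact hqp ▸ h
  · exact snd_subset_extC_fst ⟨hq, hqp⟩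

lemma NonredundantCover.not_snd_subset_closureBelow [Finite U] (hμ : IsClosure μ)
    (hα : NonredundantCover μ α) (hp : p ∈ α) : ¬p.2 ⊆ closureBelow μ p.1 := by
  rw [← hα.1.extC_withoutRhs_eq_closureBelow hμ, ← (hα.1.1 hp : p.2 = μ p.1)]
  exact fun h => hα.not_snd_subset_extC_diff hμ hp
    (h.trans (extC_mono withoutRhs_subset_diff_singleton subset_rfl))

lemma NonredundantCover.eq_of_fst_subset_closureBelow [Finite U] (hμ : IsClosure μ)
    (hα : NonredundantCover μ α) (hp : p ∈ α) (hq : q ∈ α) (h2 : q.2 = p.2)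
    (h1 : q.1 ⊆ closureBelow μ p.1) : q = p := by
  by_contra hqp
  rw [← hα.1.extC_withoutRhs_eq_closureBelow hμ, ← (hα.1.1 hp : p.2 = μ p.1)] at h1
  exact hα.not_snd_subset_extC_diff hμ hp
    (h2 ▸ extC_closed ⟨hq, hqp⟩ (h1.trans (extC_mono withoutRhs_subset_diff_singleton subset_rfl)))

lemma NonredundantCover.exists_fst_subset_closureBelow [Finite U] (hμ : IsClosure μ)
    (hα : NonredundantCover μ α) (hβ : IsCover μ β) (hp : p ∈ α) :
    ∃ Y, (Y, p.2) ∈ β ∧ Y ⊆ closureBelow μ p.1 := by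
  by_contra! hβp
  apply hα.not_snd_subset_closureBelow hμ hp
  have hβX : extC β p.1 ⊆ closureBelow μ p.1 := by
    refine extC_subset_of_closed subset_extC fun r hr hr1 =>
      extC_closed ⟨hβ.1 hr, fun hrC => ?_⟩ hr1
    rw [← (hα.1.1 hp : p.2 = μ p.1)] at hrC
    exact hβp r.1 (hrC ▸ hr) hr1
  calc p.2 = μ p.1 := hα.1.1 hp
    _ = extC β p.1 := by rw [hβ.2]
    _ ⊆ closureBelow μ p.1 := hβX

-- Each `p ∈ α` goes to a pair of `β` that it directly determines; any two preimages of such a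
-- pair are then directly determined by the pair of `α` it in turn determines, hence equal to it.
lemma NonredundantCover.ncard_le [Finite U] (hμ : IsClosure μ) (hα : NonredundantCover μ α)
    (hβ : NonredundantCover μ β) : α.ncard ≤ β.ncard := by
  have hpartner (p : Set U × Set U) : ∃ Y, p ∈ α → (Y, p.2) ∈ β ∧ Y ⊆ closureBelow μ p.1 := by
    by_cases hp : p ∈ α
    · obtain ⟨Y, hY⟩ := hα.exists_fst_subset_closureBelow hμ hβ.1 hp
      exact ⟨Y, fun _ => hY⟩
    · exact ⟨∅, fun h => absurd h hp⟩
  choose g hg using hpartner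
  refine ncard_le_ncard_of_injOn (fun p => (g p, p.2)) (fun p hp => (hg p hp).1) ?_
  intro p₁ hp₁ p₂ hp₂ heq
  obtain ⟨hg₂, hC⟩ := Prod.mk.inj heq
  obtain ⟨X', hX'α, hX'⟩ := hβ.exists_fst_subset_closureBelow hμ hα.1 (hg p₁ hp₁).1
  have hroot {p} (hp : p ∈ α) (hpC : p₁.2 = p.2) (hpg : g p₁ = g p) : (X', p₁.2) = p := by
    have hμg : μ (g p) = μ p.1 := by
      rw [← (hα.1.1 hp : p.2 = μ p.1), ← hpC, ← hpg]
      exact ((hβ.1.1 (hg p₁ hp₁).1 : p₁.2 = μ (g p₁))).symm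
    refine hα.eq_of_fst_subset_closureBelow hμ hp hX'α hpC ?_
    exact hX'.trans (hpg ▸ closureBelow_subset_closureBelow (hg p hp).2 hμg)
  exact (hroot hp₁ rfl rfl).symm.trans (hroot hp₂ hC hg₂)

lemma NonredundantCover.ncard_eq [Finite U] (hμ : IsClosure μ) (hα : NonredundantCover μ α)
    (hβ : NonredundantCover μ β) : α.ncard = β.ncard :=
  (hα.ncard_le hμ hβ).antisymm (hβ.ncard_le hμ hα)

lemma IsCover.exists_nonredundantCover_subset [Finite U] (hα : IsCover μ α) :
    ∃ β ⊆ α, NonredundantCover μ β := by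
  obtain ⟨β, hβα, hβ, hβmin⟩ := exists_minimal_le_of_wellFoundedLT (fun β => extC β = μ) α hα.2
  exact ⟨β, hβα, ⟨hβα.trans hα.1, hβ⟩, fun δ hδ hδμ => hδ.2 (hβmin hδμ hδ.1)⟩

lemma IsCover.nonredundantCover_of_ncard_le [Finite U] (hμ : IsClosure μ) (hγ : IsCover μ γ)
    (hα : NonredundantCover μ α) (h : γ.ncard ≤ α.ncard) : NonredundantCover μ γ := by
  refine ⟨hγ, fun δ hδ hδμ => ?_⟩
  obtain ⟨δ', hδ'δ, hδ'⟩ := IsCover.exists_nonredundantCover_subset ⟨hδ.subset.trans hγ.1, hδμ⟩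
  have := hδ'.ncard_eq hμ hα
  have := ncard_lt_ncard (hδ'δ.trans_ssubset hδ)
  omega

lemma NonredundantCover.exchange [Finite U] (hμ : IsClosure μ) (hα : NonredundantCover μ α)
    (hβ : NonredundantCover μ β) (hXα : (X, C) ∈ α) (hXβ : (X, C) ∉ β) :
    ∃ Y, (Y, C) ∈ β \ α ∧ NonredundantCover μ (insert (Y, C) (α \ {(X, C)})) := by
  obtain ⟨Y, hYβ, hYX⟩ := hα.exists_fst_subset_closureBelow hμ hβ.1 hXα
  have hYα : (Y, C) ∉ α := fun h =>
    hXβ (hα.eq_of_fst_subset_closureBelow hμ hXα h rfl hYX ▸ hYβ)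
  have hγ : IsCover μ (insert (Y, C) (α \ {(X, C)})) := by
    refine hα.1.of_derivable hμ (insert_subset (hβ.1.1 hYβ) (sdiff_subset.trans hα.1.1))
      fun r hr => ?_
    by_cases hrX : r = (X, C)
    · subst hrX
      rw [← hα.1.extC_withoutRhs_eq_closureBelow hμ, ← (hα.1.1 hXα : C = μ X)] at hYX
      have hsub : withoutRhs α C ⊆ insert (Y, C) (α \ {(X, C)}) :=
        (withoutRhs_subset_diff_singleton (p := (X, C))).trans (subset_insert _ _)
      exact extC_closed (p := (Y, C)) (mem_insert _ _) (hYX.trans (extC_mono hsub subset_rfl))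
    · exact snd_subset_extC_fst (mem_insert_of_mem _ ⟨hr, hrX⟩)
  refine ⟨Y, ⟨hYβ, hYα⟩, hγ.nonredundantCover_of_ncard_le hμ hα ?_⟩
  rw [ncard_insert_of_notMem fun h => hYα h.1, ncard_sdiff_singleton_of_mem hXα]
  have := (ncard_pos (toFinite α)).mpr ⟨_, hXα⟩
  omega

end Covers

theorem matroid_of_closure [Finite U] (μ : Set U → Set U) (hμ : IsClosure μ) :
    (∀ α β : Set (Set U × Set U), NonredundantCover μ α → NonredundantCover μ β →
      α.ncard = β.ncard) ∧
    (∀ α γ : Set (Set U × Set U), NonredundantFn μ α → γ ⊆ α → NonredundantFn μ γ) ∧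
    (∀ α β : Set (Set U × Set U), NonredundantCover μ α → NonredundantCover μ β →
      α ≠ β → ∀ X C : Set U, (X, C) ∈ α \ β →
        ∃ Y : Set U, (Y, C) ∈ β \ α ∧
          NonredundantCover μ (insert (Y, C) (α \ {(X, C)}))) :=
  ⟨fun _ _ hα hβ => hα.ncard_eq hμ hβ,
    fun _ _ ⟨β, hβ, hαβ⟩ hγα => ⟨β, hβ, hγα.trans hαβ⟩,
    fun _ _ hα hβ _ _ _ hXC => hα.exchange hμ hβ hXC.1 hXC.2⟩
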